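/- Under the well-specified setting P₀ = P_{θ*} and the prior mass condition π({θ : D_k(P_θ,P_{θ*}) ≤ n^{−1/2}}) ≥ e^{−β/n}, the MMD-Bayes posterior satisfies E[∫ D_k(P_θ,P₀) π_n^β(dθ)] ≤ 4/√n. Consequently, for any sequence Mₙ → ∞, the posterior mass π_n^β({θ : D_k(P_θ,P₀) > Mₙ·n^{−1/2}}) converges to 0 in probability (indeed in L¹). -/

import Mathlib

/-!
Write `L θ = ‖m θ - μ̂ₙ‖²` for the MMD loss against the empirical embedding `μ̂ₙ`. Jensen's
inequality for `exp` under the Gibbs posterior gives `β ∫ L ≤ log ∫ exp (β L) = -log Z`, and the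
prior mass condition bounds the normaliser `Z` from below through the ball of radius `n^{-1/2}`
around `θ*`; hence `∫ L ≤ (n^{-1/2} + δ)² + 1/n` with `δ = ‖μ̂ₙ - μ₀‖`. Cauchy–Schwarz and the
triangle inequality turn this into `∫ D_k(P_θ, P₀) ≤ 2 n^{-1/2} + 2 δ`, while independence gives
`E δ² ≤ 1/n`, so the posterior risk is at most `4/√n` in expectation. Markov's inequality, once
under the posterior and once under the sampling law, yields the two convergence statements.
-/

open MeasureTheory ProbabilityTheory Filter

open scoped ENNReal NNReal RealInnerProductSpace

/-- The Gibbs measure `π_β(dθ) ∝ exp(−β·L(θ))·π(dθ)`. -/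
noncomputable def gibbs {Θ : Type*} [MeasurableSpace Θ] (π : Measure Θ) (β : ℝ)
    (L : Θ → ℝ) : Measure Θ :=
  (∫⁻ θ, ENNReal.ofReal (Real.exp (-β * L θ)) ∂π)⁻¹ •
    π.withDensity fun θ => ENNReal.ofReal (Real.exp (-β * L θ))

section Probability

variable {α : Type*} [MeasurableSpace α] {μ : Measure α}

lemma measureReal_lt_le_integral_div [IsFiniteMeasure μ] {f g : α → ℝ} (hfg : ∀ x, f x ≤ g x)
    (hg0 : ∀ x, 0 ≤ g x) (hg : Integrable g μ) {ε : ℝ} (hε : 0 < ε) :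
    μ.real {x | ε < f x} ≤ (∫ x, g x ∂μ) / ε := by
  rw [le_div_iff₀ hε, mul_comm]
  calc ε * μ.real {x | ε < f x} ≤ ε * μ.real {x | ε ≤ g x} :=
        mul_le_mul_of_nonneg_left (measureReal_mono fun x hx => hx.le.trans (hfg x)) hε.le
    _ ≤ ∫ x, g x ∂μ := mul_meas_ge_le_integral_of_nonneg (ae_of_all _ hg0) hg ε

lemma integral_le_sqrt_integral_sq [IsProbabilityMeasure μ] {f : α → ℝ} (hf : Integrable f μ)
    (hf2 : Integrable (fun x => f x ^ 2) μ) : ∫ x, f x ∂μ ≤ √(∫ x, f x ^ 2 ∂μ) :=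
  Real.le_sqrt_of_sq_le <| (Even.convexOn_pow (n := 2) even_two).map_integral_le
    (continuous_pow 2).continuousOn isClosed_univ (ae_of_all _ fun _ => Set.mem_univ _) hf hf2

lemma integral_norm_sub_integral_sq_le {H : Type*} [NormedAddCommGroup H] [InnerProductSpace ℝ H]
    [CompleteSpace H] [IsProbabilityMeasure μ] {f : α → H} (hf : Integrable f μ)
    (hf2 : Integrable (fun x => ‖f x‖ ^ 2) μ) :
    ∫ x, ‖f x - ∫ y, f y ∂μ‖ ^ 2 ∂μ ≤ ∫ x, ‖f x‖ ^ 2 ∂μ := by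
  set c := ∫ y, f y ∂μ
  have hinner : Integrable (fun x => ⟪c, f x⟫) μ := hf.const_inner c
  have hexpand : ∀ x, ‖f x - c‖ ^ 2 = ‖f x‖ ^ 2 - 2 * ⟪c, f x⟫ + ‖c‖ ^ 2 := fun x => by
    rw [norm_sub_sq_real, real_inner_comm]
  simp_rw [hexpand]
  have hint : Integrable (fun x => ‖f x‖ ^ 2 - 2 * ⟪c, f x⟫) μ := hf2.sub (hinner.const_mul 2)
  rw [integral_add hint (integrable_const _),
    integral_sub hf2 (hinner.const_mul 2), integral_const_mul, integral_inner hf,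
    real_inner_self_eq_norm_sq, integral_const, probReal_univ, one_smul]
  nlinarith [sq_nonneg ‖c‖]

end Probability

section Gibbs

variable {Θ : Type*} [MeasurableSpace Θ] {π : Measure Θ} {β : ℝ} {L : Θ → ℝ}

lemma isProbabilityMeasure_gibbs [IsFiniteMeasure π] [NeZero π] (hβ : 0 ≤ β)
    (hL : Measurable L) (hL0 : ∀ θ, 0 ≤ L θ) : IsProbabilityMeasure (gibbs π β L) := by
  set Z := ∫⁻ θ, ENNReal.ofReal (Real.exp (-β * L θ)) ∂π
  have hZ0 : Z ≠ 0 := by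
    rw [Ne, lintegral_eq_zero_iff (by fun_prop)]
    intro h
    have : ∀ᵐ θ ∂π, False := h.mono fun θ hθ => (Real.exp_pos _).not_ge (by simpa using hθ)
    exact NeZero.ne π (ae_eq_bot.1 (eventually_false_iff_eq_bot.1 this))
  have hZtop : Z ≠ ∞ := by
    refine ne_top_of_le_ne_top (measure_ne_top π Set.univ) ?_
    calc Z ≤ ∫⁻ _, 1 ∂π := lintegral_mono fun θ =>
          ENNReal.ofReal_le_one.2 (Real.exp_le_one_iff.2 (by nlinarith [hL0 θ]))
      _ = π Set.univ := lintegral_one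
  constructor
  rw [gibbs, Measure.smul_apply, withDensity_apply _ MeasurableSet.univ, Measure.restrict_univ,
    smul_eq_mul, ENNReal.inv_mul_cancel hZ0 hZtop]

lemma integral_gibbs (hL : Measurable L) (h : Θ → ℝ) :
    ∫ θ, h θ ∂gibbs π β L = (∫⁻ θ, ENNReal.ofReal (Real.exp (-β * L θ)) ∂π)⁻¹.toReal *
      ∫ θ, Real.exp (-β * L θ) * h θ ∂π := by
  rw [gibbs, integral_smul_measure, smul_eq_mul,
    integral_withDensity_eq_integral_toReal_smul (by fun_prop) (ae_of_all _ fun _ => by simp)]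
  simp only [ENNReal.toReal_ofReal (Real.exp_nonneg _), smul_eq_mul]

lemma ofReal_exp_mul_measure_le_lintegral (hβ : 0 ≤ β) {A : Set Θ} (hA : MeasurableSet A) {c : ℝ}
    (hAc : ∀ θ ∈ A, L θ ≤ c) :
    ENNReal.ofReal (Real.exp (-β * c)) * π A ≤ ∫⁻ θ, ENNReal.ofReal (Real.exp (-β * L θ)) ∂π := by
  rw [← lintegral_indicator_const hA]
  refine lintegral_mono fun θ => ?_
  by_cases hθ : θ ∈ A
  · rw [Set.indicator_of_mem hθ]
    exact ENNReal.ofReal_le_ofReal (Real.exp_le_exp.2 (by nlinarith [hAc θ hθ]))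
  · simp [hθ]

theorem integral_gibbs_le [IsProbabilityMeasure π] (hβ : 0 < β) (hL : Measurable L)
    (hL0 : ∀ θ, 0 ≤ L θ) {C : ℝ} (hLC : ∀ θ, L θ ≤ C) {A : Set Θ} (hA : MeasurableSet A)
    {c p : ℝ} (hAc : ∀ θ ∈ A, L θ ≤ c) (hmass : ENNReal.ofReal (Real.exp (-β * p)) ≤ π A) :
    ∫ θ, L θ ∂gibbs π β L ≤ c + p := by
  have := isProbabilityMeasure_gibbs (π := π) hβ.le hL hL0
  set Z := ∫⁻ θ, ENNReal.ofReal (Real.exp (-β * L θ)) ∂π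
  have hZ : ENNReal.ofReal (Real.exp (-β * (c + p))) ≤ Z :=
    calc ENNReal.ofReal (Real.exp (-β * (c + p)))
        = ENNReal.ofReal (Real.exp (-β * c)) * ENNReal.ofReal (Real.exp (-β * p)) := by
          rw [← ENNReal.ofReal_mul (Real.exp_nonneg _), ← Real.exp_add, mul_add]
      _ ≤ ENNReal.ofReal (Real.exp (-β * c)) * π A := by gcongr
      _ ≤ Z := ofReal_exp_mul_measure_le_lintegral hβ.le hA hAc
  have hZinv : Z⁻¹.toReal ≤ Real.exp (β * (c + p)) := by
    refine ENNReal.toReal_le_of_le_ofReal (Real.exp_nonneg _) ?_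
    rw [← neg_neg (β * (c + p)), Real.exp_neg, ENNReal.ofReal_inv_of_pos (Real.exp_pos _),
      ← neg_mul]
    exact ENNReal.inv_le_inv.2 hZ
  have hexp : ∫ θ, Real.exp (β * L θ) ∂gibbs π β L = Z⁻¹.toReal := by
    have hcancel : ∀ θ, Real.exp (-β * L θ) * Real.exp (β * L θ) = 1 := fun θ => by
      rw [← Real.exp_add, neg_mul, neg_add_cancel, Real.exp_zero]
    simp only [integral_gibbs hL, hcancel, integral_const, probReal_univ, smul_eq_mul, mul_one]
    rfl
  have hjensen : Real.exp (∫ θ, β * L θ ∂gibbs π β L) ≤ ∫ θ, Real.exp (β * L θ) ∂gibbs π β L :=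
    convexOn_exp.map_integral_le Real.continuous_exp.continuousOn isClosed_univ
      (ae_of_all _ fun _ => trivial)
      (Integrable.of_bound (hL.const_mul β).aestronglyMeasurable (β * C) (ae_of_all _ fun θ => by
        rw [Real.norm_eq_abs, abs_of_nonneg (by nlinarith [hL0 θ])]; nlinarith [hLC θ]))
      (Integrable.of_bound (by fun_prop) (Real.exp (β * C)) (ae_of_all _ fun θ => by
        rw [Function.comp_apply, Real.norm_eq_abs, abs_of_nonneg (Real.exp_nonneg _)]
        exact Real.exp_le_exp.2 (by nlinarith [hLC θ])))
  rw [integral_const_mul, hexp] at hjensen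
  exact le_of_mul_le_mul_left (Real.exp_le_exp.1 (hjensen.trans hZinv)) hβ

end Gibbs

theorem integral_norm_sub_gibbs_le {Θ H : Type*} [MeasurableSpace Θ] [NormedAddCommGroup H]
    {π : Measure Θ} [IsProbabilityMeasure π] {β : ℝ} (hβ : 0 < β)
    {m : Θ → H} (hm : StronglyMeasurable m) {R : ℝ} (hmR : ∀ θ, ‖m θ‖ ≤ R) (μh : H) (θs : Θ)
    {r : ℝ} (hr : 0 ≤ r)
    (hmass : ENNReal.ofReal (Real.exp (-β * r ^ 2)) ≤ π {θ | ‖m θ - m θs‖ ≤ r}) :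
    ∫ θ, ‖m θ - m θs‖ ∂gibbs π β (fun θ => ‖m θ - μh‖ ^ 2) ≤ 2 * r + 2 * ‖μh - m θs‖ := by
  set δ := ‖μh - m θs‖
  set G := gibbs π β fun θ => ‖m θ - μh‖ ^ 2
  have hd : Measurable fun θ => ‖m θ - μh‖ := (hm.sub stronglyMeasurable_const).norm.measurable
  have := isProbabilityMeasure_gibbs (π := π) hβ.le (hd.pow_const 2) fun θ => sq_nonneg _
  have hdR : ∀ θ, ‖m θ - μh‖ ≤ R + ‖μh‖ := fun θ =>
    (norm_sub_le _ _).trans (by linarith [hmR θ])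
  have hnear : ∀ θ ∈ {θ | ‖m θ - m θs‖ ≤ r}, ‖m θ - μh‖ ^ 2 ≤ (r + δ) ^ 2 := fun θ hθ => by
    have htri := norm_sub_le_norm_sub_add_norm_sub (m θ) (m θs) μh
    rw [norm_sub_rev (m θs)] at htri
    exact pow_le_pow_left₀ (norm_nonneg _) (htri.trans (add_le_add_left hθ δ)) 2
  have hloss : ∫ θ, ‖m θ - μh‖ ^ 2 ∂G ≤ (r + δ) ^ 2 + r ^ 2 :=
    integral_gibbs_le hβ (hd.pow_const 2) (fun θ => sq_nonneg _)
      (fun θ => pow_le_pow_left₀ (norm_nonneg _) (hdR θ) 2)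
      (measurableSet_le (hm.sub stronglyMeasurable_const).norm.measurable measurable_const)
      hnear hmass
  have hdint : Integrable (fun θ => ‖m θ - μh‖) G :=
    Integrable.of_bound hd.aestronglyMeasurable _ (ae_of_all _ fun θ => by simpa using hdR θ)
  have hd2int : Integrable (fun θ => ‖m θ - μh‖ ^ 2) G :=
    Integrable.of_bound (hd.pow_const 2).aestronglyMeasurable _ (ae_of_all _ fun θ => by
      simpa using pow_le_pow_left₀ (norm_nonneg _) (hdR θ) 2)
  have hmean : ∫ θ, ‖m θ - μh‖ ∂G ≤ 2 * r + δ :=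
    calc ∫ θ, ‖m θ - μh‖ ∂G ≤ √(∫ θ, ‖m θ - μh‖ ^ 2 ∂G) :=
          integral_le_sqrt_integral_sq hdint hd2int
      _ ≤ √((r + δ) ^ 2 + r ^ 2) := Real.sqrt_le_sqrt hloss
      _ ≤ 2 * r + δ := Real.sqrt_le_iff.2 ⟨by positivity, by nlinarith [norm_nonneg (μh - m θs)]⟩
  have hint : Integrable (fun θ => ‖m θ - m θs‖) G :=
    Integrable.of_bound (hm.sub stronglyMeasurable_const).norm.aestronglyMeasurable (R + R)
      (ae_of_all _ fun θ => by simpa using (norm_sub_le _ _).trans (add_le_add (hmR θ) (hmR θs)))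
  calc ∫ θ, ‖m θ - m θs‖ ∂G ≤ ∫ θ, (‖m θ - μh‖ + δ) ∂G :=
        integral_mono hint (hdint.add (integrable_const δ))
          fun θ => norm_sub_le_norm_sub_add_norm_sub _ _ _
    _ = ∫ θ, ‖m θ - μh‖ ∂G + δ := by
        rw [integral_add hdint (integrable_const _), integral_const, probReal_univ, one_smul]
    _ ≤ 2 * r + 2 * δ := by linarith

section Average

variable {E : Type*} [NormedAddCommGroup E] [NormedSpace ℝ E] {n : ℕ}

lemma inv_smul_sum_sub (hn : n ≠ 0) (v : Fin n → E) (c : E) :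
    (n : ℝ)⁻¹ • ∑ i, v i - c = (n : ℝ)⁻¹ • ∑ i, (v i - c) := by
  rw [Finset.sum_sub_distrib, smul_sub, Finset.sum_const, Finset.card_univ, Fintype.card_fin,
    ← Nat.cast_smul_eq_nsmul ℝ, smul_smul, inv_mul_cancel₀ (Nat.cast_ne_zero.2 hn), one_smul]

lemma norm_inv_smul_sum_le (hn : n ≠ 0) {v : Fin n → E} {C : ℝ} (hv : ∀ i, ‖v i‖ ≤ C) :
    ‖(n : ℝ)⁻¹ • ∑ i, v i‖ ≤ C := by
  have hn' : (0 : ℝ) < n := Nat.cast_pos.2 (Nat.pos_of_ne_zero hn)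
  rw [norm_smul, Real.norm_of_nonneg (inv_nonneg.2 hn'.le), inv_mul_le_iff₀ hn']
  simpa using norm_sum_le_of_le Finset.univ fun i _ => hv i

end Average

section Empirical

variable {Ω 𝕏 H : Type*} [MeasurableSpace Ω] [MeasurableSpace 𝕏] [NormedAddCommGroup H]
  [InnerProductSpace ℝ H] {μ : Measure Ω} {ν : Measure 𝕏}

theorem integral_norm_sum_sq_of_indepFun [CompleteSpace H] [IsFiniteMeasure μ]
    {ι : Type*} [Fintype ι] {X : ι → Ω → 𝕏} (hX : ∀ i, Measurable (X i))
    (hind : Pairwise fun i j => IndepFun (X i) (X j) μ) (hlaw : ∀ i, μ.map (X i) = ν)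
    {f : 𝕏 → H} (hf : StronglyMeasurable f) {C : ℝ} (hfC : ∀ x, ‖f x‖ ≤ C)
    (hf0 : ∫ x, f x ∂ν = 0) :
    ∫ ω, ‖∑ i, f (X i ω)‖ ^ 2 ∂μ = Fintype.card ι * ∫ x, ‖f x‖ ^ 2 ∂ν := by
  have hfX : ∀ i, StronglyMeasurable fun ω => f (X i ω) := fun i => hf.comp_measurable (hX i)
  have hint : ∀ i j, Integrable (fun ω => ⟪f (X i ω), f (X j ω)⟫) μ := fun i j =>
    Integrable.of_bound ((hfX i).inner (hfX j)).aestronglyMeasurable (C * C)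
      (ae_of_all _ fun ω => (norm_inner_le_norm _ _).trans
        (mul_le_mul (hfC _) (hfC _) (norm_nonneg _) ((norm_nonneg (f (X i ω))).trans (hfC _))))
  have hdiag : ∀ i, ∫ ω, ⟪f (X i ω), f (X i ω)⟫ ∂μ = ∫ x, ‖f x‖ ^ 2 ∂ν := fun i => by
    simp_rw [real_inner_self_eq_norm_sq]
    rw [← hlaw i, integral_map (f := fun x => ‖f x‖ ^ 2) (hX i).aemeasurable
      (hf.norm.pow 2).aestronglyMeasurable]
  have hoff : ∀ i j, i ≠ j → ∫ ω, ⟪f (X i ω), f (X j ω)⟫ ∂μ = 0 := fun i j hij => by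
    have hmean : ∀ k, ∫ ω, f (X k ω) ∂μ = 0 := fun k => by
      rw [← integral_map (hX k).aemeasurable (hlaw k ▸ hf.aestronglyMeasurable), hlaw k, hf0]
    have hfint : ∀ k, Integrable f (μ.map (X k)) := fun k =>
      Integrable.of_bound hf.aestronglyMeasurable C (ae_of_all _ hfC)
    refine ((hind hij).integral_bilin_comp_comp (hX i).aemeasurable (hX j).aemeasurable
      (hfint i) (hfint j) (innerSL ℝ)).trans ?_
    simp [hmean]
  calc ∫ ω, ‖∑ i, f (X i ω)‖ ^ 2 ∂μ = ∑ i, ∑ j, ∫ ω, ⟪f (X i ω), f (X j ω)⟫ ∂μ := by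
        simp_rw [← real_inner_self_eq_norm_sq, sum_inner, inner_sum]
        rw [integral_finsetSum _ fun i _ => integrable_finsetSum _ fun j _ => hint i j]
        exact Finset.sum_congr rfl fun i _ => integral_finsetSum _ fun j _ => hint i j
    _ = ∑ _i : ι, ∫ x, ‖f x‖ ^ 2 ∂ν := Finset.sum_congr rfl fun i _ => by
        rw [Finset.sum_eq_single i (fun j _ hji => hoff i j hji.symm) (by simp), hdiag]
    _ = _ := by simp

theorem integral_norm_empirical_sub_sq_le [CompleteSpace H] [IsProbabilityMeasure μ]
    [IsProbabilityMeasure ν] {n : ℕ} (hn : n ≠ 0) {X : Fin n → Ω → 𝕏} (hX : ∀ i, Measurable (X i))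
    (hind : Pairwise fun i j => IndepFun (X i) (X j) μ) (hlaw : ∀ i, μ.map (X i) = ν)
    {Φ : 𝕏 → H} (hΦ : StronglyMeasurable Φ) {C : ℝ} (hΦC : ∀ x, ‖Φ x‖ ≤ C) :
    ∫ ω, ‖(n : ℝ)⁻¹ • ∑ i, Φ (X i ω) - ∫ x, Φ x ∂ν‖ ^ 2 ∂μ ≤ C ^ 2 / n := by
  set μ0 := ∫ x, Φ x ∂ν
  have hΦint : Integrable Φ ν := Integrable.of_bound hΦ.aestronglyMeasurable C (ae_of_all _ hΦC)
  have hΦ2int : Integrable (fun x => ‖Φ x‖ ^ 2) ν :=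
    Integrable.of_bound (hΦ.norm.pow 2).aestronglyMeasurable (C ^ 2) (ae_of_all _ fun x => by
      simpa using pow_le_pow_left₀ (norm_nonneg _) (hΦC x) 2)
  have hsum := integral_norm_sum_sq_of_indepFun hX hind hlaw (f := fun x => Φ x - μ0)
    (hΦ.sub stronglyMeasurable_const) (fun x => norm_sub_le_of_le (hΦC x) le_rfl)
    (by rw [integral_sub hΦint (integrable_const _), integral_const, probReal_univ, one_smul,
      sub_self])
  have hvar : ∫ x, ‖Φ x - μ0‖ ^ 2 ∂ν ≤ C ^ 2 :=
    (integral_norm_sub_integral_sq_le hΦint hΦ2int).trans <|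
      (integral_mono hΦ2int (integrable_const _) fun x =>
        pow_le_pow_left₀ (norm_nonneg _) (hΦC x) 2).trans (by simp)
  have hn' : (0 : ℝ) < n := Nat.cast_pos.2 (Nat.pos_of_ne_zero hn)
  calc ∫ ω, ‖(n : ℝ)⁻¹ • ∑ i, Φ (X i ω) - μ0‖ ^ 2 ∂μ
      = ((n : ℝ)⁻¹) ^ 2 * (n * ∫ x, ‖Φ x - μ0‖ ^ 2 ∂ν) := by
        simp_rw [inv_smul_sum_sub hn, norm_smul, mul_pow, integral_const_mul, hsum,
          Fintype.card_fin, Real.norm_of_nonneg (inv_nonneg.2 hn'.le)]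
    _ ≤ ((n : ℝ)⁻¹) ^ 2 * (n * C ^ 2) := by gcongr
    _ = C ^ 2 / n := by field_simp

lemma integrable_norm_empirical_sub [IsFiniteMeasure μ] {n : ℕ} (hn : n ≠ 0) {X : Fin n → Ω → 𝕏}
    (hX : ∀ i, Measurable (X i)) {Φ : 𝕏 → H} (hΦ : StronglyMeasurable Φ) {C : ℝ}
    (hΦC : ∀ x, ‖Φ x‖ ≤ C) (c : H) {p : ℕ} :
    Integrable (fun ω => ‖(n : ℝ)⁻¹ • ∑ i, Φ (X i ω) - c‖ ^ p) μ := by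
  refine Integrable.of_bound ((((Finset.stronglyMeasurable_fun_sum _ fun i _ =>
    hΦ.comp_measurable (hX i)).const_smul _).sub stronglyMeasurable_const).norm.pow p
    ).aestronglyMeasurable ((C + ‖c‖) ^ p) (ae_of_all _ fun ω => ?_)
  rw [inv_smul_sum_sub hn, norm_pow, norm_norm]
  exact pow_le_pow_left₀ (norm_nonneg _) (norm_inv_smul_sum_le hn fun i =>
    norm_sub_le_of_le (hΦC _) le_rfl) p

theorem integral_norm_empirical_sub_le [CompleteSpace H] [IsProbabilityMeasure μ]
    [IsProbabilityMeasure ν] {n : ℕ} (hn : n ≠ 0) {X : Fin n → Ω → 𝕏} (hX : ∀ i, Measurable (X i))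
    (hind : Pairwise fun i j => IndepFun (X i) (X j) μ) (hlaw : ∀ i, μ.map (X i) = ν)
    {Φ : 𝕏 → H} (hΦ : StronglyMeasurable Φ) {C : ℝ} (hC : 0 ≤ C) (hΦC : ∀ x, ‖Φ x‖ ≤ C) :
    ∫ ω, ‖(n : ℝ)⁻¹ • ∑ i, Φ (X i ω) - ∫ x, Φ x ∂ν‖ ∂μ ≤ C / √n :=
  calc ∫ ω, ‖(n : ℝ)⁻¹ • ∑ i, Φ (X i ω) - ∫ x, Φ x ∂ν‖ ∂μ
      ≤ √(∫ ω, ‖(n : ℝ)⁻¹ • ∑ i, Φ (X i ω) - ∫ x, Φ x ∂ν‖ ^ 2 ∂μ) :=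
        integral_le_sqrt_integral_sq
          (by simpa using integrable_norm_empirical_sub hn hX hΦ hΦC _ (p := 1))
          (integrable_norm_empirical_sub hn hX hΦ hΦC _)
    _ ≤ √(C ^ 2 / n) := Real.sqrt_le_sqrt (integral_norm_empirical_sub_sq_le hn hX hind hlaw hΦ hΦC)
    _ = C / √n := by rw [Real.sqrt_div' _ (Nat.cast_nonneg n), Real.sqrt_sq hC]

end Empirical

section PosteriorTail

variable {Ω Θ : Type*} [MeasurableSpace Θ] {G : Ω → Measure Θ} [∀ ω, IsFiniteMeasure (G ω)]
  {d : Θ → ℝ} {B : Ω → ℝ} {t : ℝ}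

lemma measureReal_lt_le_div_of_integral_le (hd0 : ∀ θ, 0 ≤ d θ)
    (hdG : ∀ ω, Integrable d (G ω)) (hGB : ∀ ω, ∫ θ, d θ ∂G ω ≤ B ω) (ht : 0 < t) (ω : Ω) :
    (G ω).real {θ | t < d θ} ≤ B ω / t :=
  (measureReal_lt_le_integral_div (fun _ => le_rfl) hd0 (hdG ω) ht).trans
    (div_le_div_of_nonneg_right (hGB ω) ht.le)

variable [MeasurableSpace Ω] {μ : Measure Ω}

lemma integral_measureReal_lt_le (hd0 : ∀ θ, 0 ≤ d θ) (hdG : ∀ ω, Integrable d (G ω))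
    (hB : Integrable B μ) (hGB : ∀ ω, ∫ θ, d θ ∂G ω ≤ B ω) (ht : 0 < t) :
    ∫ ω, (G ω).real {θ | t < d θ} ∂μ ≤ (∫ ω, B ω ∂μ) / t := by
  rw [← integral_div]
  exact integral_mono_of_nonneg (ae_of_all _ fun _ => measureReal_nonneg) (hB.div_const t)
    (ae_of_all _ (measureReal_lt_le_div_of_integral_le hd0 hdG hGB ht))

lemma measureReal_lt_measureReal_lt_le [IsFiniteMeasure μ] (hd0 : ∀ θ, 0 ≤ d θ)
    (hdG : ∀ ω, Integrable d (G ω)) (hB : Integrable B μ) (hGB : ∀ ω, ∫ θ, d θ ∂G ω ≤ B ω)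
    (ht : 0 < t) {ε : ℝ} (hε : 0 < ε) :
    μ.real {ω | ε < (G ω).real {θ | t < d θ}} ≤ (∫ ω, B ω ∂μ) / t / ε := by
  rw [← integral_div]
  exact measureReal_lt_le_integral_div (measureReal_lt_le_div_of_integral_le hd0 hdG hGB ht)
    (fun ω => div_nonneg ((integral_nonneg hd0).trans (hGB ω)) ht.le) (hB.div_const t) hε

end PosteriorTail

lemma tendsto_zero_of_le_div_atTop {u M : ℕ → ℝ} {K : ℝ} (hM : Tendsto M atTop atTop)
    (hu0 : ∀ n, 0 ≤ u n) (hu : ∀ᶠ n in atTop, u n ≤ K / M n) : Tendsto u atTop (nhds 0) :=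
  squeeze_zero' (Eventually.of_forall hu0) hu (tendsto_const_nhds.div_atTop hM)

section Rate

variable {Ω Θ : Type*} [MeasurableSpace Ω] [MeasurableSpace Θ] {μ : Measure Ω}
  {G : ℕ → Ω → Measure Θ} [∀ n ω, IsFiniteMeasure (G n ω)] {d : Θ → ℝ} {B : ℕ → Ω → ℝ}
  {s M : ℕ → ℝ} {K : ℝ}

theorem tendsto_integral_measureReal_lt_of_rate (hd0 : ∀ θ, 0 ≤ d θ)
    (hdG : ∀ n ω, Integrable d (G n ω)) (hB : ∀ᶠ n in atTop, Integrable (B n) μ)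
    (hGB : ∀ᶠ n in atTop, ∀ ω, ∫ θ, d θ ∂G n ω ≤ B n ω)
    (hEB : ∀ᶠ n in atTop, ∫ ω, B n ω ∂μ ≤ K / s n) (hs : ∀ᶠ n in atTop, 0 < s n)
    (hM : Tendsto M atTop atTop) :
    Tendsto (fun n => ∫ ω, (G n ω).real {θ | M n / s n < d θ} ∂μ) atTop (nhds 0) := by
  refine tendsto_zero_of_le_div_atTop (K := K) hM
    (fun n => integral_nonneg fun _ => measureReal_nonneg) ?_
  filter_upwards [hB, hGB, hEB, hs, hM.eventually_gt_atTop 0] with n hBn hGBn hEBn hsn hMn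
  calc _ ≤ (∫ ω, B n ω ∂μ) / (M n / s n) :=
        integral_measureReal_lt_le hd0 (hdG n) hBn hGBn (by positivity)
    _ ≤ K / s n / (M n / s n) := by gcongr
    _ = K / M n := by field_simp

theorem tendsto_measureReal_measureReal_lt_of_rate [IsFiniteMeasure μ] (hd0 : ∀ θ, 0 ≤ d θ)
    (hdG : ∀ n ω, Integrable d (G n ω)) (hB : ∀ᶠ n in atTop, Integrable (B n) μ)
    (hGB : ∀ᶠ n in atTop, ∀ ω, ∫ θ, d θ ∂G n ω ≤ B n ω)
    (hEB : ∀ᶠ n in atTop, ∫ ω, B n ω ∂μ ≤ K / s n) (hs : ∀ᶠ n in atTop, 0 < s n)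
    (hM : Tendsto M atTop atTop) {ε : ℝ} (hε : 0 < ε) :
    Tendsto (fun n => μ.real {ω | ε < (G n ω).real {θ | M n / s n < d θ}}) atTop (nhds 0) := by
  refine tendsto_zero_of_le_div_atTop (K := K / ε) hM (fun n => measureReal_nonneg) ?_
  filter_upwards [hB, hGB, hEB, hs, hM.eventually_gt_atTop 0] with n hBn hGBn hEBn hsn hMn
  calc _ ≤ (∫ ω, B n ω ∂μ) / (M n / s n) / ε :=
        measureReal_lt_measureReal_lt_le hd0 (hdG n) hBn hGBn (by positivity) hε
    _ ≤ K / s n / (M n / s n) / ε := by gcongr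
    _ = K / ε / M n := by field_simp

end Rate


/-- Concentration of the MMD-Bayes posterior in the well-specified case
`P₀ = P_{θ*}`.  The MMD is expressed via the kernel mean embedding: `Φ` is the
feature map of a kernel bounded by 1, `m θ = μ_{P_θ}`, `μ0 = μ_{P₀} = m θ*`, and
the empirical embedding of the i.i.d. sample `X₁,…,Xₙ ∼ P₀` is `(1/n)∑ᵢ Φ(Xᵢ)`.
Under the prior mass condition, `E[∫ D_k(P_θ,P₀) π_n^β(dθ)] ≤ 4/√n`; consequently
for any `Mₙ → ∞` the posterior mass of `{θ : D_k(P_θ,P₀) > Mₙ n^{-1/2}}` converges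
to `0` in L¹ and in probability. -/
theorem stmt_11 {𝕏 H Θ Ω : Type*} [MeasurableSpace 𝕏]
    [NormedAddCommGroup H] [InnerProductSpace ℝ H] [CompleteSpace H]
    [MeasurableSpace Θ] [MeasureSpace Ω] [IsProbabilityMeasure (ℙ : Measure Ω)]
    (Φ : 𝕏 → H) (hΦmeas : StronglyMeasurable Φ) (hΦbdd : ∀ x, ‖Φ x‖ ≤ 1)
    (P : Θ → Measure 𝕏) (hP : ∀ θ, IsProbabilityMeasure (P θ))
    (m : Θ → H) (hm : ∀ θ, m θ = ∫ x, Φ x ∂(P θ)) (hmmeas : StronglyMeasurable m)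
    (P0 : Measure 𝕏) [IsProbabilityMeasure P0] (μ0 : H) (hμ0 : μ0 = ∫ x, Φ x ∂P0)
    (θs : Θ) (hwell : P0 = P θs)
    (X : ∀ n : ℕ, Fin n → Ω → 𝕏) (hXmeas : ∀ n i, Measurable (X n i))
    (hiid : ∀ n, iIndepFun (X n) ℙ)
    (hlaw : ∀ n i, Measure.map (X n i) ℙ = P0)
    (π : Measure Θ) [IsProbabilityMeasure π] (β : ℝ) (hβ : 0 < β)
    (hmass : ∀ n : ℕ, 1 ≤ n → ENNReal.ofReal (Real.exp (-β / n))
      ≤ π {θ | ‖m θ - m θs‖ ≤ 1 / Real.sqrt n}) :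
    (∀ n : ℕ, 1 ≤ n →
        (∫ ω, ∫ θ, ‖m θ - μ0‖
            ∂(gibbs π β fun θ => ‖m θ - (n : ℝ)⁻¹ • ∑ i, Φ (X n i ω)‖ ^ 2) ∂ℙ)
          ≤ 4 / Real.sqrt n) ∧
      ∀ M : ℕ → ℝ, Tendsto M atTop atTop →
        (Tendsto (fun n : ℕ => ∫ ω,
            ((gibbs π β fun θ => ‖m θ - (n : ℝ)⁻¹ • ∑ i, Φ (X n i ω)‖ ^ 2)
              {θ | M n / Real.sqrt n < ‖m θ - μ0‖}).toReal ∂ℙ)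
          atTop (nhds 0)) ∧
        ∀ ε : ℝ, 0 < ε →
          Tendsto (fun n : ℕ => (ℙ {ω : Ω |
              ε < ((gibbs π β fun θ => ‖m θ - (n : ℝ)⁻¹ • ∑ i, Φ (X n i ω)‖ ^ 2)
                {θ | M n / Real.sqrt n < ‖m θ - μ0‖}).toReal}).toReal)
            atTop (nhds 0) := by
  have hmR : ∀ θ, ‖m θ‖ ≤ 1 := fun θ => by
    have := hP θ
    simpa [hm θ] using norm_integral_le_of_norm_le_const (μ := P θ) (ae_of_all _ hΦbdd)
  obtain rfl : m θs = μ0 := by rw [hm θs, hμ0, hwell]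
  set G : ℕ → Ω → Measure Θ := fun n ω =>
    gibbs π β fun θ => ‖m θ - (n : ℝ)⁻¹ • ∑ i, Φ (X n i ω)‖ ^ 2
  set B : ℕ → Ω → ℝ := fun n ω => 2 / √n + 2 * ‖(n : ℝ)⁻¹ • ∑ i, Φ (X n i ω) - m θs‖
  have : ∀ n ω, IsProbabilityMeasure (G n ω) := fun n ω =>
    isProbabilityMeasure_gibbs hβ.le
      ((hmmeas.sub stronglyMeasurable_const).norm.measurable.pow_const 2) fun _ => sq_nonneg _
  have hdG : ∀ n ω, Integrable (fun θ => ‖m θ - m θs‖) (G n ω) := fun n ω =>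
    Integrable.of_bound (hmmeas.sub stronglyMeasurable_const).norm.aestronglyMeasurable (1 + 1)
      (ae_of_all _ fun θ => by simpa using (norm_sub_le _ _).trans (add_le_add (hmR θ) (hmR θs)))
  have hGB : ∀ n, 1 ≤ n → ∀ ω, ∫ θ, ‖m θ - m θs‖ ∂G n ω ≤ B n ω := fun n hn ω => by
    have hmass' : ENNReal.ofReal (Real.exp (-β * (1 / √n) ^ 2))
        ≤ π {θ | ‖m θ - m θs‖ ≤ 1 / √n} := by
      rw [div_pow, one_pow, Real.sq_sqrt (Nat.cast_nonneg n), mul_one_div]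
      exact hmass n hn
    exact (integral_norm_sub_gibbs_le hβ hmmeas hmR _ θs (by positivity) hmass').trans_eq
      (by simp only [B]; ring)
  have hδ : ∀ n : ℕ, 1 ≤ n → Integrable (fun ω => ‖(n : ℝ)⁻¹ • ∑ i, Φ (X n i ω) - m θs‖) ℙ :=
    fun n hn => by
      simpa using integrable_norm_empirical_sub (Nat.one_le_iff_ne_zero.1 hn) (hXmeas n)
        hΦmeas hΦbdd (m θs) (p := 1)
  have hB : ∀ n, 1 ≤ n → Integrable (B n) ℙ := fun n hn =>
    (integrable_const _).add ((hδ n hn).const_mul 2)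
  have hEB : ∀ n, 1 ≤ n → ∫ ω, B n ω ∂ℙ ≤ 4 / √n := fun n hn => by
    have hE := integral_norm_empirical_sub_le (Nat.one_le_iff_ne_zero.1 hn) (hXmeas n)
      (fun i j hij => (hiid n).indepFun hij) (hlaw n) hΦmeas zero_le_one hΦbdd
    rw [← hμ0] at hE
    rw [integral_add (integrable_const _) ((hδ n hn).const_mul 2), integral_const_mul,
      integral_const, probReal_univ, one_smul]
    linarith [show 4 / √(n : ℝ) = 2 / √n + 2 * (1 / √n) by ring]
  have hsqrt : ∀ᶠ n : ℕ in atTop, 0 < √(n : ℝ) :=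
    (eventually_gt_atTop 0).mono fun n hn => Real.sqrt_pos.2 (Nat.cast_pos.2 hn)
  refine ⟨fun n hn => ?_, fun M hM => ⟨?_, fun ε hε => ?_⟩⟩
  · exact (integral_mono_of_nonneg (ae_of_all _ fun ω => integral_nonneg fun θ => norm_nonneg _)
      (hB n hn) (ae_of_all _ (hGB n hn))).trans (hEB n hn)
  · exact tendsto_integral_measureReal_lt_of_rate (G := G) (s := fun n => √n)
      (fun _ => norm_nonneg _) hdG (eventually_atTop.2 ⟨1, hB⟩) (eventually_atTop.2 ⟨1, hGB⟩)
      (eventually_atTop.2 ⟨1, hEB⟩) hsqrt hM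
  · exact tendsto_measureReal_measureReal_lt_of_rate (G := G) (s := fun n => √n)
      (fun _ => norm_nonneg _) hdG (eventually_atTop.2 ⟨1, hB⟩) (eventually_atTop.2 ⟨1, hGB⟩)
      (eventually_atTop.2 ⟨1, hEB⟩) hsqrt hM hε
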